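/- arXiv:1603.03693 — 2 statements merged into one kernel-verified Lean document; each statement's English description precedes it below -/
import Mathlib

section
/- On the interval (-1,1), the function g(ρ) = (2/π)(ρ·arcsin(ρ) + √(1-ρ²)·(2+ρ²)/3) has second derivative g''(ρ) = (4/π)√(1-ρ²), which is nonnegative; hence g is convex on (-1,1). -/
open Real Set

noncomputable def gfun : ℝ → ℝ :=
  fun x : ℝ => 2 / Real.pi * (x * Real.arcsin x + Real.sqrt (1 - x^2) * (2 + x^2) / 3)

noncomputable def g1 : ℝ → ℝ :=
  fun x : ℝ => 2 / Real.pi * (Real.arcsin x + x * Real.sqrt (1 - x^2))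

lemma sq_pos_aux {x : ℝ} (hx : x ∈ Set.Ioo (-1:ℝ) 1) : 0 < 1 - x^2 := by
  nlinarith [hx.1, hx.2]

lemma hasDeriv_g {x : ℝ} (hx : x ∈ Set.Ioo (-1:ℝ) 1) : HasDerivAt gfun (g1 x) x := by
  have h2 : (0:ℝ) < 1 - x^2 := sq_pos_aux hx
  have hs : 0 < Real.sqrt (1 - x^2) := Real.sqrt_pos.2 h2
  have hs2 : Real.sqrt (1 - x^2) ^ 2 = 1 - x^2 := Real.sq_sqrt h2.le
  have harc : HasDerivAt Real.arcsin (1 / Real.sqrt (1 - x^2)) x :=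
    Real.hasDerivAt_arcsin hx.1.ne' hx.2.ne
  have h1 : HasDerivAt (fun x : ℝ => x * Real.arcsin x)
      (1 * Real.arcsin x + x * (1 / Real.sqrt (1 - x^2))) x :=
    (hasDerivAt_id x).mul harc
  have hq : HasDerivAt (fun x : ℝ => 1 - x^2) (-(2*x)) x := by
    simpa using ((hasDerivAt_pow 2 x).const_sub 1)
  have hsq : HasDerivAt (fun x : ℝ => Real.sqrt (1 - x^2))
      (-(2*x) / (2 * Real.sqrt (1 - x^2))) x := hq.sqrt h2.ne'
  have hp : HasDerivAt (fun x : ℝ => 2 + x^2) (2*x) x := by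
    simpa using ((hasDerivAt_pow 2 x).const_add 2)
  have hmul : HasDerivAt (fun x : ℝ => Real.sqrt (1 - x^2) * (2 + x^2))
      ((-(2*x) / (2 * Real.sqrt (1 - x^2))) * (2 + x^2) + Real.sqrt (1 - x^2) * (2*x)) x :=
    hsq.mul hp
  have hsum := (h1.add (hmul.div_const 3)).const_mul (2 / Real.pi)
  refine hsum.congr_deriv (Eq.symm ?_)
  have hπ := Real.pi_pos
  unfold g1
  field_simp
  linear_combination x * hs2

lemma hasDeriv_g1 {x : ℝ} (hx : x ∈ Set.Ioo (-1:ℝ) 1) :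
    HasDerivAt g1 (4 / Real.pi * Real.sqrt (1 - x^2)) x := by
  have h2 : (0:ℝ) < 1 - x^2 := sq_pos_aux hx
  have hs : 0 < Real.sqrt (1 - x^2) := Real.sqrt_pos.2 h2
  have hs2 : Real.sqrt (1 - x^2) ^ 2 = 1 - x^2 := Real.sq_sqrt h2.le
  have harc : HasDerivAt Real.arcsin (1 / Real.sqrt (1 - x^2)) x :=
    Real.hasDerivAt_arcsin hx.1.ne' hx.2.ne
  have hq : HasDerivAt (fun x : ℝ => 1 - x^2) (-(2*x)) x := by
    simpa using ((hasDerivAt_pow 2 x).const_sub 1)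
  have hsq : HasDerivAt (fun x : ℝ => Real.sqrt (1 - x^2))
      (-(2*x) / (2 * Real.sqrt (1 - x^2))) x := hq.sqrt h2.ne'
  have hmul : HasDerivAt (fun x : ℝ => x * Real.sqrt (1 - x^2))
      (1 * Real.sqrt (1 - x^2) + x * (-(2*x) / (2 * Real.sqrt (1 - x^2)))) x :=
    (hasDerivAt_id x).mul hsq
  have hsum := (harc.add hmul).const_mul (2 / Real.pi)
  refine hsum.congr_deriv (Eq.symm ?_)
  have hπ := Real.pi_pos
  field_simp
  linear_combination 2 * hs2

lemma deriv_g_eventually {ρ : ℝ} (hρ : ρ ∈ Set.Ioo (-1:ℝ) 1) :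
    deriv gfun =ᶠ[nhds ρ] g1 := by
  filter_upwards [isOpen_Ioo.mem_nhds hρ] with x hx
  exact (hasDeriv_g hx).deriv

theorem g_second_derivative :
    (∀ ρ ∈ Set.Ioo (-1:ℝ) 1,
      deriv (deriv (fun x : ℝ =>
          2 / Real.pi * (x * Real.arcsin x + Real.sqrt (1 - x^2) * (2 + x^2) / 3))) ρ
        = 4 / Real.pi * Real.sqrt (1 - ρ^2) ∧
      0 ≤ 4 / Real.pi * Real.sqrt (1 - ρ^2)) ∧
    ConvexOn ℝ (Set.Ioo (-1:ℝ) 1)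
      (fun x : ℝ => 2 / Real.pi * (x * Real.arcsin x + Real.sqrt (1 - x^2) * (2 + x^2) / 3)) := by
  have key : ∀ ρ ∈ Set.Ioo (-1:ℝ) 1,
      deriv (deriv gfun) ρ = 4 / Real.pi * Real.sqrt (1 - ρ^2) := by
    intro ρ hρ
    rw [(deriv_g_eventually hρ).deriv_eq]
    exact (hasDeriv_g1 hρ).deriv
  constructor
  · intro ρ hρ
    refine ⟨key ρ hρ, ?_⟩
    have := Real.pi_pos
    positivity
  · have hint : interior (Set.Ioo (-1:ℝ) 1) = Set.Ioo (-1:ℝ) 1 := interior_Ioo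
    have := convexOn_of_deriv2_nonneg (convex_Ioo (-1:ℝ) 1)
      (f := gfun)
      (fun x hx => (hasDeriv_g hx).differentiableAt.continuousAt.continuousWithinAt)
      (by
        rw [hint]
        exact fun x hx => (hasDeriv_g hx).differentiableAt.differentiableWithinAt)
      (by
        rw [hint]
        intro x hx
        have : DifferentiableAt ℝ (deriv gfun) x := by
          have := (hasDeriv_g1 hx).differentiableAt
          exact this.congr_of_eventuallyEq (deriv_g_eventually hx)
        exact this.differentiableWithinAt)
      (by
        rw [hint]
        intro x hx
        simp only [Function.iterate_succ, Function.iterate_zero, Function.comp, id]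
        rw [show deriv (deriv gfun) x = _ from key x hx]
        have := Real.pi_pos
        positivity)
    exact this
end

section
/- For any r > 0 and any (w,z) ∈ ℝ² with |z| < r, the average of the function (w',z') ↦ |z'| over the disc of radius r centered at (w,z) equals r·g(z/r), i.e., (1/(π r²)) ∬_{D_r(w,z)} |z'| dw' dz' = r·(2/π)( (z/r)·arcsin(z/r) + (1/3)√(1-z²/r²)(2+z²/r²) ). -/
open MeasureTheory


lemma step1 (r w z : ℝ) (hr : 0 ≤ r) (c : EuclideanSpace ℝ (Fin 2)) (hc0 : c 0 = w) (hc1 : c 1 = z) :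
    ∫ p in Metric.closedBall c r, |p 1| ∂volume
    = ∫ p in {q : ℝ × ℝ | (q.1 - w)^2 + (q.2 - z)^2 ≤ r^2}, |p.2| ∂volume := by
  have hmp : MeasurePreserving
      (fun p : ℝ × ℝ => (MeasurableEquiv.toLp 2 (Fin 2 → ℝ))
        ((MeasurableEquiv.finTwoArrow (α := ℝ)).symm p)) volume volume :=
    ((EuclideanSpace.volume_preserving_symm_measurableEquiv_toLp (Fin 2)).symm _).comp
      ((volume_preserving_finTwoArrow ℝ).symm _)
  have hemb : MeasurableEmbedding
      (fun p : ℝ × ℝ => (MeasurableEquiv.toLp 2 (Fin 2 → ℝ))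
        ((MeasurableEquiv.finTwoArrow (α := ℝ)).symm p)) :=
    ((MeasurableEquiv.finTwoArrow (α := ℝ)).symm.trans
      (MeasurableEquiv.toLp 2 (Fin 2 → ℝ))).measurableEmbedding
  rw [← hmp.setIntegral_preimage_emb hemb (fun p => |p 1|) (Metric.closedBall c r)]
  have hcoord : ∀ (p : ℝ × ℝ) (i : Fin 2),
      ((MeasurableEquiv.toLp 2 (Fin 2 → ℝ))
        ((MeasurableEquiv.finTwoArrow (α := ℝ)).symm p)) i = ![p.1, p.2] i := fun p i => rfl
  have hset : (fun p : ℝ × ℝ => (MeasurableEquiv.toLp 2 (Fin 2 → ℝ))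
        ((MeasurableEquiv.finTwoArrow (α := ℝ)).symm p)) ⁻¹' Metric.closedBall c r
      = {q : ℝ × ℝ | (q.1 - w)^2 + (q.2 - z)^2 ≤ r^2} := by
    ext p
    simp only [Set.mem_preimage, Metric.mem_closedBall, Set.mem_setOf_eq,
      EuclideanSpace.dist_eq, hcoord]
    rw [show r = Real.sqrt (r^2) from (Real.sqrt_sq hr).symm,
      Real.sqrt_le_sqrt_iff (by positivity), Fin.sum_univ_two]
    simp [hc0, hc1, Real.dist_eq, sq_abs]
    rw [Real.sq_sqrt (by positivity : (0:ℝ) ≤ r ^ 2)]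
  rw [hset]
  refine setIntegral_congr_fun ?_ (fun p _ => ?_)
  · exact measurableSet_le (by fun_prop) measurable_const
  · exact congrArg abs (hcoord p 1)


lemma step2 (r w z : ℝ) (hr : 0 < r) :
    ∫ p in {q : ℝ × ℝ | (q.1 - w)^2 + (q.2 - z)^2 ≤ r^2}, |p.2| ∂volume
    = ∫ y in Set.Icc (z - r) (z + r), |y| * (2 * Real.sqrt (r^2 - (y - z)^2)) := by
  set S : Set (ℝ × ℝ) := {q : ℝ × ℝ | (q.1 - w)^2 + (q.2 - z)^2 ≤ r^2} with hSdef
  have hS : MeasurableSet S := measurableSet_le (by fun_prop) measurable_const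
  have hSsub : S ⊆ Set.Icc (w - r, z - r) (w + r, z + r) := by
    rintro ⟨x, y⟩ hq
    simp only [hSdef, Set.mem_setOf_eq] at hq
    have h1 : |x - w| ≤ r := abs_le_of_sq_le_sq (by nlinarith [sq_nonneg (y - z)]) hr.le
    have h2 : |y - z| ≤ r := abs_le_of_sq_le_sq (by nlinarith [sq_nonneg (x - w)]) hr.le
    rw [abs_le] at h1 h2
    constructor <;> constructor <;> dsimp <;> linarith [h1.1, h1.2, h2.1, h2.2]
  have hScl : IsClosed S := isClosed_le (by fun_prop) continuous_const
  have hScpt : IsCompact S := (isCompact_Icc).of_isClosed_subset hScl hSsub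
  have hInt : IntegrableOn (fun p : ℝ × ℝ => |p.2|) S volume :=
    (Continuous.continuousOn (by fun_prop)).integrableOn_compact hScpt
  have hInd : Integrable (S.indicator fun p : ℝ × ℝ => |p.2|) volume :=
    (integrable_indicator_iff hS).2 hInt
  rw [← integral_indicator hS]
  have hprod := MeasureTheory.integral_prod_symm (μ := (volume : Measure ℝ))
      (ν := (volume : Measure ℝ)) (S.indicator fun p : ℝ × ℝ => |p.2|)
      (by rwa [← MeasureTheory.Measure.volume_eq_prod ℝ ℝ])
  rw [MeasureTheory.Measure.volume_eq_prod ℝ ℝ, hprod]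
  have hinner : ∀ y : ℝ, (∫ x, S.indicator (fun p : ℝ × ℝ => |p.2|) (x, y) ∂volume)
      = |y| * (2 * Real.sqrt (r^2 - (y - z)^2)) := by
    intro y
    set d := r^2 - (y - z)^2 with hd
    rcases le_or_gt 0 d with hd0 | hd0
    · have hsect : (fun x => S.indicator (fun p : ℝ × ℝ => |p.2|) (x, y))
          = (Set.Icc (w - Real.sqrt d) (w + Real.sqrt d)).indicator (fun _ => |y|) := by
        funext x
        by_cases hx : (x - w)^2 ≤ d
        · have hx1 : |x - w| ≤ Real.sqrt d :=
            abs_le_of_sq_le_sq (by rw [Real.sq_sqrt hd0]; exact hx) (Real.sqrt_nonneg d)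
          rw [abs_le] at hx1
          rw [Set.indicator_of_mem (by simp only [hSdef, Set.mem_setOf_eq]; linarith),
            Set.indicator_of_mem (by constructor <;> linarith)]
        · have hx2 : ¬ (x - w) ^ 2 + (y - z) ^ 2 ≤ r ^ 2 := by
            intro h; exact hx (by linarith)
          have hx1 : ¬ (|x - w| ≤ Real.sqrt d) := by
            intro h
            exact hx (by nlinarith [Real.sq_sqrt hd0, sq_abs (x - w), abs_nonneg (x-w),
              Real.sqrt_nonneg d])
          rw [abs_le] at hx1
          rw [Set.indicator_of_notMem (by simpa [hSdef] using hx2),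
            Set.indicator_of_notMem (fun hmem => hx1 (by
              rw [Set.mem_Icc] at hmem; constructor <;> linarith [hmem.1, hmem.2]))]
      rw [hsect, integral_indicator_const _ measurableSet_Icc]
      simp only [smul_eq_mul, Measure.real, Real.volume_Icc]
      rw [ENNReal.toReal_ofReal (by nlinarith [Real.sqrt_nonneg d])]
      ring
    · have hzero : (fun x => S.indicator (fun p : ℝ × ℝ => |p.2|) (x, y)) = fun _ => 0 := by
        funext x
        rw [Set.indicator_of_notMem]
        simp only [hSdef, Set.mem_setOf_eq, not_le]
        nlinarith [sq_nonneg (x - w)]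
      rw [hzero, integral_zero, Real.sqrt_eq_zero_of_nonpos hd0.le]
      ring
  rw [integral_congr_ae (Filter.Eventually.of_forall hinner)]
  symm
  apply setIntegral_eq_integral_of_forall_compl_eq_zero
  intro y hy
  have : r^2 - (y - z)^2 < 0 := by
    simp only [Set.mem_Icc, not_and_or, not_le] at hy
    rcases hy with h | h <;> nlinarith
  rw [Real.sqrt_eq_zero_of_nonpos this.le]
  ring


lemma hasDerivG (r z y : ℝ) (h1 : z - r < y) (h2 : y < z + r) :
    HasDerivAt (fun y => z*(y-z)*Real.sqrt (r^2-(y-z)^2) + z*r^2*Real.arcsin ((y-z)/r)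
      - 2/3*(Real.sqrt (r^2-(y-z)^2))^3) (2*y*Real.sqrt (r^2-(y-z)^2)) y := by
  have hr0 : 0 < r := by linarith
  have hu1 : -r < y - z := by linarith
  have hu2 : y - z < r := by linarith
  have hd0 : 0 < r^2 - (y-z)^2 := by nlinarith
  set s := Real.sqrt (r^2 - (y-z)^2) with hs
  have hs0 : 0 < s := Real.sqrt_pos.2 hd0
  have hs2 : s^2 = r^2 - (y-z)^2 := Real.sq_sqrt hd0.le
  have hinner : HasDerivAt (fun y : ℝ => r^2 - (y-z)^2) (-(2*(y-z))) y := by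
    have := (((hasDerivAt_id y).sub_const z).pow 2).const_sub (r^2)
    refine this.congr_deriv (Eq.symm ?_)
    simp
  have hsqrt : HasDerivAt (fun y : ℝ => Real.sqrt (r^2-(y-z)^2)) (-(y-z)/s) y := by
    have := (Real.hasDerivAt_sqrt (ne_of_gt hd0)).comp y hinner
    refine this.congr_deriv (Eq.symm ?_)
    rw [← hs]
    field_simp
  have hlin : HasDerivAt (fun y : ℝ => (y - z)/r) (1/r) y := by
    have := ((hasDerivAt_id y).sub_const z).div_const r
    simpa using this
  have hne1 : (y - z)/r ≠ -1 := by
    intro h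
    rw [div_eq_iff hr0.ne'] at h; linarith [h]
  have hne2 : (y - z)/r ≠ 1 := by
    intro h
    rw [div_eq_iff hr0.ne'] at h; linarith [h]
  have harcsin : HasDerivAt (fun y : ℝ => Real.arcsin ((y-z)/r)) (1/s) y := by
    have := (Real.hasDerivAt_arcsin hne1 hne2).comp y hlin
    refine this.congr_deriv (Eq.symm ?_)
    have h1' : 1 - ((y-z)/r)^2 = (r^2 - (y-z)^2)/r^2 := by field_simp
    rw [h1', Real.sqrt_div hd0.le, Real.sqrt_sq hr0.le, ← hs]
    field_simp
  have hcube : HasDerivAt (fun y : ℝ => (Real.sqrt (r^2-(y-z)^2))^3)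
      (3 * s^2 * (-(y-z)/s)) y := by
    have := hsqrt.pow 3
    refine this.congr_deriv (Eq.symm ?_)
    rw [← hs]; norm_num
  have hmul : HasDerivAt (fun y : ℝ => z*(y-z)*Real.sqrt (r^2-(y-z)^2))
      (z*s + z*(y-z)*(-(y-z)/s)) y := by
    have hl : HasDerivAt (fun y : ℝ => z*(y-z)) z y := by
      simpa using ((hasDerivAt_id y).sub_const z).const_mul z
    have := hl.mul hsqrt
    refine this.congr_deriv (Eq.symm ?_)
    rw [← hs]
  have harc2 : HasDerivAt (fun y : ℝ => z*r^2*Real.arcsin ((y-z)/r)) (z*r^2*(1/s)) y :=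
    harcsin.const_mul (z*r^2)
  have hcube2 : HasDerivAt (fun y : ℝ => 2/3*(Real.sqrt (r^2-(y-z)^2))^3)
      (2/3*(3 * s^2 * (-(y-z)/s))) y := hcube.const_mul (2/3)
  have htotal := (hmul.add harc2).sub hcube2
  refine htotal.congr_deriv (Eq.symm ?_)
  field_simp
  linear_combination z * hs2

lemma step3 (r z : ℝ) (hz : |z| < r) :
    ∫ y in Set.Icc (z - r) (z + r), |y| * (2 * Real.sqrt (r^2 - (y - z)^2))
    = 2*z^2*Real.sqrt (r^2 - z^2) + 2*z*r^2*Real.arcsin (z/r)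
      + 4/3*(Real.sqrt (r^2 - z^2))^3 := by
  have hzz := abs_lt.1 hz
  have hr : 0 < r := lt_of_le_of_lt (abs_nonneg z) hz
  have ha : z - r < 0 := by linarith [hzz.2]
  have hb : 0 < z + r := by linarith [hzz.1]
  set G : ℝ → ℝ := fun y => z*(y-z)*Real.sqrt (r^2-(y-z)^2) + z*r^2*Real.arcsin ((y-z)/r)
      - 2/3*(Real.sqrt (r^2-(y-z)^2))^3 with hG
  have hGc : Continuous G := by
    apply Continuous.sub
    apply Continuous.add
    · exact (continuous_const.mul (continuous_id.sub continuous_const)).mul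
        ((continuous_const.sub ((continuous_id.sub continuous_const).pow 2)).sqrt)
    · exact continuous_const.mul (Real.continuous_arcsin.comp
        ((continuous_id.sub continuous_const).div_const r))
    · exact continuous_const.mul
        (((continuous_const.sub ((continuous_id.sub continuous_const).pow 2)).sqrt).pow 3)
  have hfc : Continuous (fun y : ℝ => |y| * (2 * Real.sqrt (r^2 - (y - z)^2))) := by
    exact (continuous_abs.mul (continuous_const.mul
      ((continuous_const.sub ((continuous_id.sub continuous_const).pow 2)).sqrt)))
  rw [MeasureTheory.integral_Icc_eq_integral_Ioc,
    ← intervalIntegral.integral_of_le (by linarith : z - r ≤ z + r)]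
  have hint1 : IntervalIntegrable (fun y : ℝ => |y| * (2 * Real.sqrt (r^2 - (y - z)^2)))
      volume (z - r) 0 := hfc.intervalIntegrable _ _
  have hint2 : IntervalIntegrable (fun y : ℝ => |y| * (2 * Real.sqrt (r^2 - (y - z)^2)))
      volume 0 (z + r) := hfc.intervalIntegrable _ _
  rw [← intervalIntegral.integral_add_adjacent_intervals hint1 hint2]
  have hpart1 : (∫ y in (z - r)..0, |y| * (2 * Real.sqrt (r^2 - (y - z)^2)))
      = G (z - r) - G 0 := by
    have hcong : (∫ y in (z - r)..0, |y| * (2 * Real.sqrt (r^2 - (y - z)^2)))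
        = ∫ y in (z - r)..0, -(2*y*Real.sqrt (r^2 - (y - z)^2)) := by
      apply intervalIntegral.integral_congr
      intro y hy
      rw [Set.uIcc_of_le (by linarith), Set.mem_Icc] at hy
      dsimp only; rw [abs_of_nonpos hy.2]; ring
    rw [hcong]
    have := intervalIntegral.integral_eq_sub_of_hasDerivAt_of_le (le_of_lt ha)
      (f := fun y => -(G y)) (f' := fun y => -(2*y*Real.sqrt (r^2 - (y - z)^2)))
      (hGc.neg.continuousOn)
      (fun x hx => (hasDerivG r z x (hx.1) (by linarith [hx.2])).neg)
      (by apply Continuous.intervalIntegrable; fun_prop)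
    rw [this]; ring
  have hpart2 : (∫ y in (0:ℝ)..(z + r), |y| * (2 * Real.sqrt (r^2 - (y - z)^2)))
      = G (z + r) - G 0 := by
    have hcong : (∫ y in (0:ℝ)..(z + r), |y| * (2 * Real.sqrt (r^2 - (y - z)^2)))
        = ∫ y in (0:ℝ)..(z + r), 2*y*Real.sqrt (r^2 - (y - z)^2) := by
      apply intervalIntegral.integral_congr
      intro y hy
      rw [Set.uIcc_of_le (by linarith), Set.mem_Icc] at hy
      dsimp only; rw [abs_of_nonneg hy.1]; ring
    rw [hcong]
    exact intervalIntegral.integral_eq_sub_of_hasDerivAt_of_le (le_of_lt hb)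
      (hGc.continuousOn)
      (fun x hx => hasDerivG r z x (by linarith [hx.1]) hx.2)
      (by apply Continuous.intervalIntegrable; fun_prop)
  rw [hpart1, hpart2]
  have hGa : G (z - r) = -(z*r^2*(Real.pi/2)) := by
    rw [hG]
    have h1 : z - r - z = -r := by ring
    simp only [h1]
    rw [neg_sq, sub_self, Real.sqrt_zero, neg_div, div_self hr.ne', Real.arcsin_neg,
      Real.arcsin_one]
    ring
  have hGb : G (z + r) = z*r^2*(Real.pi/2) := by
    rw [hG]
    have h1 : z + r - z = r := by ring
    simp only [h1]
    rw [sub_self, Real.sqrt_zero, div_self hr.ne', Real.arcsin_one]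
    ring
  have hG0 : G 0 = -(z^2*Real.sqrt (r^2 - z^2)) - z*r^2*Real.arcsin (z/r)
      - 2/3*(Real.sqrt (r^2 - z^2))^3 := by
    rw [hG]
    have h1 : (0:ℝ) - z = -z := by ring
    simp only [h1]
    rw [neg_sq, neg_div, Real.arcsin_neg]
    ring
  rw [hGa, hGb, hG0]
  ring

theorem disc_average_abs_inside (r w z : ℝ) (hr : 0 < r)
    (c : EuclideanSpace ℝ (Fin 2)) (hc0 : c 0 = w) (hc1 : c 1 = z)
    (hz : |z| < r) :
    (1 / (Real.pi * r^2)) * ∫ p in Metric.closedBall c r, |p 1| ∂volume =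
      r * (2 / Real.pi * ((z/r) * Real.arcsin (z/r)
        + Real.sqrt (1 - (z/r)^2) * (2 + (z/r)^2) / 3)) := by
  rw [step1 r w z hr.le c hc0 hc1, step2 r w z hr, step3 r z hz]
  have hd0 : (0:ℝ) ≤ r^2 - z^2 := by nlinarith [abs_lt.1 hz, abs_nonneg z]
  set S := Real.sqrt (r^2 - z^2) with hS
  have hS2 : S^2 = r^2 - z^2 := Real.sq_sqrt hd0
  have hS3 : S^3 = (r^2 - z^2) * S := by rw [pow_succ, hS2]
  have hsq : Real.sqrt (1 - (z/r)^2) = S / r := by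
    have h1 : 1 - (z/r)^2 = (r^2 - z^2)/r^2 := by field_simp
    rw [h1, Real.sqrt_div hd0, Real.sqrt_sq hr.le, hS]
  rw [hsq, hS3]
  have hpi : Real.pi ≠ 0 := Real.pi_ne_zero
  field_simp
  ring
end
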